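/- arXiv:1607.08322 — 4 statements merged into one kernel-verified Lean document; each statement's English description precedes it below -/
import Mathlib

section
/- If P is an invertible k×k matrix over a finite field F_q such that every square submatrix of P is nonsingular (P is super-regular), then every square submatrix of P^{-1} is also nonsingular. -/
open Matrix

/-- A matrix is super-regular if every square submatrix (given by injective row and
column selections) is nonsingular. -/
def SuperRegular {F : Type*} [Field F] {k : ℕ} (P : Matrix (Fin k) (Fin k) F) : Prop :=
  ∀ (m : ℕ) (r c : Fin m → Fin k), Function.Injective r → Function.Injective c →
    (P.submatrix r c).det ≠ 0

theorem superRegular_inv {F : Type*} [Field F] [Fintype F] {k : ℕ} (hk : 1 ≤ k)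
    (P : Matrix (Fin k) (Fin k) F) (hP : IsUnit P.det) (hsr : SuperRegular P) :
    SuperRegular P⁻¹ := by
  classical
  intro m r c hr hc
  by_contra hdet
  obtain ⟨v, hv0, hv⟩ := (Matrix.exists_mulVec_eq_zero_iff).2 hdet
  set w : Fin k → F := fun i => ∑ j, if c j = i then v j else 0 with hw
  set x : Fin k → F := P⁻¹ *ᵥ w with hxdef
  have hPx : P *ᵥ x = w := by
    rw [hxdef, Matrix.mulVec_mulVec, Matrix.mul_nonsing_inv P hP, Matrix.one_mulVec]
  have hwc : ∀ j, w (c j) = v j := by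
    intro j
    simp only [hw]
    rw [Finset.sum_eq_single j]
    · simp
    · intro j' _ hj'
      have hne : c j' ≠ c j := fun h => hj' (hc h)
      simp [hne]
    · simp
  have hxr : ∀ i, x (r i) = 0 := by
    intro i
    have h1 : x (r i) = ∑ j, (P⁻¹).submatrix r c i j * v j := by
      simp only [hxdef, Matrix.mulVec, dotProduct, hw, Finset.mul_sum, mul_ite, mul_zero]
      rw [Finset.sum_comm]
      simp [Matrix.submatrix_apply]
    rw [h1]
    have := congrFun hv i
    simpa [Matrix.mulVec, dotProduct] using this
  set Sr : Finset (Fin k) := (Finset.univ.image r)ᶜ with hSrdef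
  set Sc : Finset (Fin k) := (Finset.univ.image c)ᶜ with hScdef
  have hSr : Sr.card = k - m := by
    simp [hSrdef, Finset.card_compl, Finset.card_image_of_injective _ hr]
  have hSc : Sc.card = k - m := by
    simp [hScdef, Finset.card_compl, Finset.card_image_of_injective _ hc]
  set r' : Fin (k - m) → Fin k := ⇑(Sr.orderEmbOfFin hSr) with hr'def
  set c' : Fin (k - m) → Fin k := ⇑(Sc.orderEmbOfFin hSc) with hc'def
  have hr'inj : Function.Injective r' := (Sr.orderEmbOfFin hSr).injective
  have hc'inj : Function.Injective c' := (Sc.orderEmbOfFin hSc).injective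
  -- the complementary submatrix of P kills x ∘ r'
  have h0 : (P.submatrix c' r') *ᵥ (x ∘ r') = 0 := by
    funext i
    have hciSc : c' i ∈ Sc := Finset.orderEmbOfFin_mem Sc hSc i
    have hwci : w (c' i) = 0 := by
      apply Finset.sum_eq_zero
      intro j _
      have : c j ≠ c' i := by
        intro h
        rw [hScdef, Finset.mem_compl] at hciSc
        exact hciSc (Finset.mem_image.2 ⟨j, Finset.mem_univ j, h⟩)
      simp [this]
    have hPxci : (P *ᵥ x) (c' i) = 0 := by rw [hPx, hwci]
    have hsum : ∑ t, P (c' i) t * x t = 0 := by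
      simpa [Matrix.mulVec, dotProduct] using hPxci
    have himage : Finset.univ.image r' = Sr := by
      ext t
      simp only [Finset.mem_image, Finset.mem_univ, true_and]
      constructor
      · rintro ⟨j, rfl⟩; exact Finset.orderEmbOfFin_mem Sr hSr j
      · intro ht
        have : t ∈ Set.range r' := by
          rw [hr'def, Finset.range_orderEmbOfFin]; exact ht
        obtain ⟨j, hj⟩ := this
        exact ⟨j, hj⟩
    have hsplit : ∑ t, P (c' i) t * x t = ∑ t ∈ Sr, P (c' i) t * x t := by
      rw [← Finset.sum_subset (Finset.subset_univ Sr)]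
      intro t _ htSr
      rw [hSrdef, Finset.mem_compl, not_not] at htSr
      obtain ⟨j, _, rfl⟩ := Finset.mem_image.1 htSr
      rw [hxr j, mul_zero]
    have : ∑ j, P (c' i) (r' j) * x (r' j) = 0 := by
      rw [← hsum, hsplit, ← himage, Finset.sum_image (fun a _ b _ h => hr'inj h)]
    simpa [Matrix.mulVec, dotProduct, Matrix.submatrix_apply] using this
  have hsub := hsr (k - m) c' r' hc'inj hr'inj
  have hxr' : x ∘ r' = 0 := by
    by_contra hy
    exact hsub ((Matrix.exists_mulVec_eq_zero_iff).1 ⟨_, hy, h0⟩)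
  have hx0 : x = 0 := by
    funext t
    by_cases ht : t ∈ Finset.univ.image r
    · obtain ⟨j, _, rfl⟩ := Finset.mem_image.1 ht
      exact hxr j
    · have htSr : t ∈ Sr := Finset.mem_compl.2 ht
      have : t ∈ Set.range r' := by
        rw [hr'def, Finset.range_orderEmbOfFin]; exact htSr
      obtain ⟨j, rfl⟩ := this
      exact congrFun hxr' j
  have hw0 : w = 0 := by rw [← hPx, hx0, Matrix.mulVec_zero]
  apply hv0
  funext j
  have := hwc j
  rw [hw0] at this
  exact (this.symm)
end

section
/- Let U be an invertible k×k matrix over F_q with dual-basis matrix Û = (U^{-1})^T, let P be an invertible k×k matrix with Q = P^{-1}, and let V = U·P with V̂ = (V^{-1})^T. Let a, e, b, f be field elements with ab + ef = 1 and be + af = 0. Then for any k×k matrix X, setting Y = a·Û·Xᵀ·V + e·X·P, one has X = b·V̂·Yᵀ·U + f·Y·Q. (Duality of the two MISER-type encoding functions.) -/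
open Matrix

theorem miser_encoding_duality {F : Type*} [Field F] [Fintype F] {k : ℕ}
    (U P : Matrix (Fin k) (Fin k) F) (hU : IsUnit U.det) (hP : IsUnit P.det)
    (a e b f : F) (h1 : a * b + e * f = 1) (h2 : b * e + a * f = 0)
    (Q V Uhat Vhat : Matrix (Fin k) (Fin k) F)
    (hQ : Q = P⁻¹) (hV : V = U * P) (hUhat : Uhat = (U⁻¹)ᵀ) (hVhat : Vhat = (V⁻¹)ᵀ)
    (X Y : Matrix (Fin k) (Fin k) F)
    (hY : Y = a • (Uhat * Xᵀ * V) + e • (X * P)) :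
    X = b • (Vhat * Yᵀ * U) + f • (Y * Q) := by
  have hUT : IsUnit Uᵀ.det := by rwa [Matrix.det_transpose]
  have hPT : IsUnit Pᵀ.det := by rwa [Matrix.det_transpose]
  subst hQ hV hUhat hVhat hY
  have e1 : (U⁻¹)ᵀ * Xᵀ * (U * P) * P⁻¹ = (U⁻¹)ᵀ * Xᵀ * U := by
    simp only [Matrix.mul_assoc]
    rw [Matrix.mul_nonsing_inv _ hP, Matrix.mul_one]
  simp only [Matrix.transpose_add, Matrix.transpose_smul, Matrix.transpose_mul,
    Matrix.transpose_transpose, Matrix.mul_inv_rev, Matrix.transpose_nonsing_inv,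
    Matrix.add_mul, Matrix.mul_add, Matrix.smul_mul, Matrix.mul_smul, smul_add,
    smul_smul, Matrix.add_mul, Matrix.mul_add, Matrix.mul_assoc, e1]
  -- now cancel transposed inverses
  have c1 : ∀ M : Matrix (Fin k) (Fin k) F, (Pᵀ)⁻¹ * (Pᵀ * M) = M := fun M =>
    Matrix.nonsing_inv_mul_cancel_left _ _ hPT
  have c2 : ∀ M : Matrix (Fin k) (Fin k) F, (Uᵀ)⁻¹ * (Uᵀ * M) = M := fun M =>
    Matrix.nonsing_inv_mul_cancel_left _ _ hUT
  have c3 : Uᵀ⁻¹ * (Uᵀ * U) = U := c2 U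
  have c4 : U⁻¹ * U = 1 := Matrix.nonsing_inv_mul _ hU
  have c5 : ((U⁻¹)ᵀ * (Xᵀ * (U * (U⁻¹ * U)))) = (U⁻¹)ᵀ * (Xᵀ * U) := by
    rw [c4, Matrix.mul_one]
  simp only [c1, c2, Matrix.mul_nonsing_inv _ hP, c4, Matrix.mul_one]
  match_scalars <;>
    first
    | linear_combination h1
    | linear_combination -h1
    | linear_combination h2
    | linear_combination -h1 - h2
    | linear_combination h1 + h2
    | linear_combination h1 - h2
    | linear_combination -h2
end

section
/- For t ≥ 2 and d ≥ k, the per-node repair bandwidth at the MBCR point is strictly smaller than at the MBR point with the same d, k and file size B: B(2d+t−1)/(k(2d+t−k)) < 2dB/(k(2d+1−k)), provided k ≥ 2. -/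
theorem mbcr_bandwidth_lt_mbr (B k d t : ℕ)
    (hB : 1 ≤ B) (hk : 2 ≤ k) (hkd : k ≤ d) (ht : 2 ≤ t) :
    (B : ℚ) * (2 * (d : ℚ) + t - 1) / ((k : ℚ) * (2 * (d : ℚ) + t - k))
      < 2 * (d : ℚ) * B / ((k : ℚ) * (2 * (d : ℚ) + 1 - k)) := by
  have hBq : (1 : ℚ) ≤ B := by exact_mod_cast hB
  have hkq : (2 : ℚ) ≤ k := by exact_mod_cast hk
  have hkdq : (k : ℚ) ≤ d := by exact_mod_cast hkd
  have htq : (2 : ℚ) ≤ t := by exact_mod_cast ht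
  have h1 : (0 : ℚ) < (k : ℚ) * (2 * (d : ℚ) + t - k) := by nlinarith
  have h2 : (0 : ℚ) < (k : ℚ) * (2 * (d : ℚ) + 1 - k) := by nlinarith
  rw [div_lt_div_iff₀ h1 h2]
  have hBpos : (0:ℚ) < B := by linarith
  have hkpos : (0:ℚ) < k := by linarith
  nlinarith [mul_pos (mul_pos hBpos hkpos) (mul_pos (sub_pos.mpr (lt_of_lt_of_le one_lt_two hkq)) (sub_pos.mpr (lt_of_lt_of_le one_lt_two htq)))]
end

section
/- Let P be a k×k super-regular matrix over F_q, let s ≤ k, and let π be any k×s submatrix of P formed by choosing s columns. Write π = [π₁; π₂] with π₁ the top s×s block. Then π₁ is invertible, and consequently for k×s matrices W₁ (s×s) and W₂ ((k−s)×s), the quantities a(W₁ᵀπ₁ + W₂ᵀπ₂) + e·W₁π₁ (top s rows) and e·W₂π₁ (bottom k−s rows) determine W₂ uniquely (given e ≠ 0), and then determine W₁ uniquely provided a+e ≠ 0 and a−e ≠ 0. -/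
/-!
`π₁` is a square submatrix of the super-regular `P`, hence invertible, so right multiplication
by `π₁` can be cancelled. This recovers `W₂` from `e • W₂ π₁`; the first equation then reduces to
`a • Dᵀ + e • D = 0` for `D = W₁ - W₁'`, and combining it with its transpose gives
`(a + e)(a - e) • D = 0`.
-/

open Matrix

theorem SuperRegular.isUnit_det_submatrix {F : Type*} [Field F] {k m : ℕ}
    {P : Matrix (Fin k) (Fin k) F} (hP : SuperRegular P) {r c : Fin m → Fin k}
    (hr : Function.Injective r) (hc : Function.Injective c) :
    IsUnit (P.submatrix r c).det :=
  isUnit_iff_ne_zero.mpr (hP m r c hr hc)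

theorem Matrix.eq_of_smul_transpose_add_smul_eq {n R : Type*} [Field R]
    {a e : R} (hae : a + e ≠ 0) (hae' : a - e ≠ 0) {X Y : Matrix n n R}
    (h : a • Xᵀ + e • X = a • Yᵀ + e • Y) : X = Y := by
  set D := X - Y
  have hS : a • Dᵀ + e • D = 0 := by
    simp only [D, transpose_sub, smul_sub]
    rw [sub_add_sub_comm, h, sub_self]
  have hD : ((a + e) * (a - e)) • D = a • (a • Dᵀ + e • D)ᵀ - e • (a • Dᵀ + e • D) := by
    simp only [transpose_add, transpose_smul, transpose_transpose]
    module
  rw [hS, transpose_zero, smul_zero, smul_zero, sub_zero] at hD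
  suffices D = 0 from sub_eq_zero.mp this
  rw [← inv_smul_smul₀ (mul_ne_zero hae hae') D, hD, smul_zero]

theorem mscr_file_recovery_step {F : Type*} [Field F] {k s : ℕ} (hs : s ≤ k)
    (P : Matrix (Fin k) (Fin k) F) (hP : SuperRegular P)
    (c : Fin s → Fin k) (hc : Function.Injective c)
    (π₁ : Matrix (Fin s) (Fin s) F) (π₂ : Matrix (Fin (k - s)) (Fin s) F)
    (hπ₁ : π₁ = Matrix.of fun i j => P (Fin.castLE hs i) (c j))
    (a e : F) (he : e ≠ 0) (hae : a + e ≠ 0) (hae' : a - e ≠ 0) :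
    IsUnit π₁.det ∧
    ∀ (W₁ W₁' : Matrix (Fin s) (Fin s) F) (W₂ W₂' : Matrix (Fin (k - s)) (Fin s) F),
      a • (W₁ᵀ * π₁ + W₂ᵀ * π₂) + e • (W₁ * π₁)
          = a • (W₁'ᵀ * π₁ + W₂'ᵀ * π₂) + e • (W₁' * π₁) →
      e • (W₂ * π₁) = e • (W₂' * π₁) →
      W₂ = W₂' ∧ W₁ = W₁' := by
  have hunit : IsUnit π₁.det := by
    rw [hπ₁]
    exact hP.isUnit_det_submatrix (Fin.castLE_injective hs) hc
  refine ⟨hunit, fun W₁ W₁' W₂ W₂' h₁ h₂ => ?_⟩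
  have := π₁.invertibleOfIsUnitDet hunit
  obtain rfl : W₂ = W₂' :=
    (Matrix.mul_left_inj_of_invertible π₁).mp (smul_right_injective _ he h₂)
  refine ⟨rfl, eq_of_smul_transpose_add_smul_eq hae hae' ?_⟩
  rw [← Matrix.mul_left_inj_of_invertible π₁]
  simpa only [add_mul, smul_mul, smul_add, add_right_comm _ (a • (W₂ᵀ * π₂)), add_left_inj]
    using h₁
end
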